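/- arXiv:2405.06302 — 2 statements merged into one kernel-verified Lean document; each statement's English description precedes it below -/
import Mathlib

section
/- If c ∈ ℝ satisfies Σ_{i ∈ S} a_i·c^i ≠ 0, then for every formal power series η ∈ ℝ[[t]] with order(η) > p, the power series Σ_{i=0}^d c_i·(c·t^p + η)^i has t-adic order equal to b_0. -/
/-!
Since `order η > p`, we can write `C a * X ^ p + η = X ^ p * w` with `constantCoeff w = a`.
The `i`-th summand is then `(X ^ (i * p) * cᵢ) * w ^ i`, of order at least
`i * p + order cᵢ ≥ b₀`, and its coefficient at `t ^ b₀` is `aᵢ * a ^ i` for `i ∈ S` and `0`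
otherwise. Hence all coefficients of the sum below `b₀` vanish and the one at `b₀` is the edge
polynomial evaluated at `a`, which is nonzero.
-/

open PowerSeries

namespace PowerSeries

variable {R : Type*}

theorem exists_eq_X_pow_mul_of_lt_order [Semiring R] {η : R⟦X⟧} {p : ℕ}
    (hη : (p : ℕ∞) < η.order) : ∃ u, η = X ^ p * u ∧ constantCoeff u = 0 := by
  obtain ⟨v, rfl⟩ : X ^ (p + 1) ∣ η := X_pow_dvd_iff.mpr fun m hm ↦
    coeff_of_lt_order m (lt_of_le_of_lt (by exact_mod_cast Nat.le_of_lt_succ hm) hη)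
  exact ⟨X * v, by rw [pow_succ, mul_assoc], by simp⟩

theorem coeff_mul_of_le_order [CommSemiring R] {φ : R⟦X⟧} {n : ℕ} (hn : (n : ℕ∞) ≤ φ.order)
    (ψ : R⟦X⟧) : coeff n (φ * ψ) = coeff n φ * constantCoeff ψ := by
  obtain ⟨φ', rfl⟩ : X ^ n ∣ φ := X_pow_dvd_iff.mpr fun m hm ↦
    coeff_of_lt_order m (lt_of_lt_of_le (by exact_mod_cast hm) hn)
  simp [mul_assoc, coeff_X_pow_mul']

theorem coeff_X_pow_mul_of_le_order_add [Semiring R] (φ : R⟦X⟧) {m k : ℕ}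
    (hk : (k : ℕ∞) ≤ m + φ.order) :
    coeff k (X ^ m * φ) = if (m : ℕ∞) + φ.order = k then coeff φ.order.toNat φ else 0 := by
  cases h : φ.order with
  | top => simp [order_eq_top.mp h]
  | coe n =>
    rw [h] at hk
    norm_cast at hk ⊢
    rw [coeff_X_pow_mul', ENat.toNat_natCast]
    split_ifs with hmk hkn hkn
    · rw [← hkn, Nat.add_sub_cancel_left]
    · exact coeff_of_lt_order _ (by rw [h]; exact_mod_cast (by omega))
    · omega
    · rfl

end PowerSeries

theorem order_preserved_nonroot_perturbation_general
    (d : ℕ) (c : Fin (d + 1) → PowerSeries ℝ)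
    (p : ℕ)
    (hmin : ∀ i : Fin (d + 1), (c 0).order ≤ ((i : ℕ) * p : ℕ∞) + (c i).order)
    (a : ℝ)
    (ha : (∑ i ∈ Finset.univ.filter
        (fun i : Fin (d + 1) => ((i : ℕ) * p : ℕ∞) + (c i).order = (c 0).order),
        (PowerSeries.coeff ((c i).order.toNat) (c i)) * a ^ (i : ℕ)) ≠ 0) :
    ∀ η : PowerSeries ℝ, (p : ℕ∞) < η.order →
      (∑ i : Fin (d + 1),
        c i * (PowerSeries.C a * PowerSeries.X ^ p + η) ^ (i : ℕ)).order =
        (c 0).order := by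
  intro η hη
  obtain ⟨u, rfl, hu⟩ := exists_eq_X_pow_mul_of_lt_order hη
  have hw : constantCoeff (C a + u) = a := by simp [hu]
  have hle_order : ∀ i : Fin (d + 1), (c 0).order ≤ order (X ^ ((i : ℕ) * p) * c i) := fun i ↦ by
    grw [hmin i, ← le_order_mul, order_X_pow]
    push_cast
    rfl
  have hterm : ∀ i : Fin (d + 1), ∀ k : ℕ, (k : ℕ∞) ≤ (c 0).order →
      coeff k (c i * (C a * X ^ p + X ^ p * u) ^ (i : ℕ)) =
        coeff k (X ^ ((i : ℕ) * p) * c i) * a ^ (i : ℕ) := by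
    intro i k hk
    rw [show C a * X ^ p + X ^ p * u = X ^ p * (C a + u) by ring, mul_pow, ← pow_mul,
      mul_comm p, mul_left_comm, ← mul_assoc,
      coeff_mul_of_le_order (hk.trans (hle_order i)), map_pow, hw]
  rw [order_eq]
  constructor
  · intro k hk
    convert ha using 1
    rw [map_sum, Finset.sum_filter]
    refine Finset.sum_congr rfl fun i _ ↦ ?_
    rw [hterm i k hk.le, coeff_X_pow_mul_of_le_order_add _ (by push_cast; exact hk ▸ hmin i), hk]
    push_cast
    split_ifs <;> simp
  · intro k hk
    rw [map_sum]
    refine Finset.sum_eq_zero fun i _ ↦ ?_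
    rw [hterm i k hk.le, coeff_of_lt_order k (hk.trans_le (hle_order i)), zero_mul]

/-- Lemma 2.2(i), 'in particular' part: if `c` is not a root of the polynomial associated
to the highest Newton edge, then the order of `Σ cᵢ·(c·t^p + η)^i` equals `order c₀`. -/
theorem order_preserved_nonroot_perturbation
    (d : ℕ) (c : Fin (d + 1) → PowerSeries ℝ) (hc : ∃ i, c i ≠ 0)
    (p : ℕ) (hp : 0 < p)
    (hb0 : (c 0).order ≠ ⊤)
    (hmin : ∀ i : Fin (d + 1), (c 0).order ≤ ((i : ℕ) * p : ℕ∞) + (c i).order)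
    (a : ℝ)
    (ha : (∑ i ∈ Finset.univ.filter
        (fun i : Fin (d + 1) => ((i : ℕ) * p : ℕ∞) + (c i).order = (c 0).order),
        (PowerSeries.coeff ((c i).order.toNat) (c i)) * a ^ (i : ℕ)) ≠ 0) :
    ∀ η : PowerSeries ℝ, (p : ℕ∞) < η.order →
      (∑ i : Fin (d + 1),
        c i * (PowerSeries.C a * PowerSeries.X ^ p + η) ^ (i : ℕ)).order =
        (c 0).order :=
  order_preserved_nonroot_perturbation_general d c p hmin a ha
end

section
/- With the notation in the context, the multiplicity m of γ as a root of F equals the least index i such that i·r + b_i = min_{0 ≤ j ≤ D} (j·r + b_j). -/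
open PowerSeries Polynomial

open Finset

/-!
For a weight `r`, the quantity `i·r + ord(cᵢ)` attached to the coefficients of a polynomial over
`ℂ⟦t⟧` behaves like a Gauss valuation: for a product `P Q`, its minimum is the sum of the minima,
and the least index attaining it is the sum of the least indices `a + b`, because in the
coefficient of `X^(a+b)` the term `P_a Q_b` has strictly smaller weight than every other term.
After the shift `X ↦ X + γ̃` the polynomial becomes `u ∏ⱼ (X - (γⱼ - γ̃))`, and the factor `X - δ`
has least index `1` if `ord δ > r` and `0` otherwise. As `γ̃` agrees with `γ` up to the contact
order `r`, the inequality `ord (γⱼ - γ̃) > r` holds exactly for the `m` roots `γⱼ = γ`.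
-/

namespace PowerSeries

variable {R : Type*}

theorem le_order_sum [Semiring R] {ι : Type*} (s : Finset ι) (φ : ι → R⟦X⟧) {n : ℕ∞}
    (h : ∀ i ∈ s, n ≤ (φ i).order) : n ≤ (∑ i ∈ s, φ i).order :=
  le_order _ _ fun k hk => by
    rw [map_sum]
    exact sum_eq_zero fun i hi => coeff_of_lt_order k (hk.trans_le (h i hi))

theorem le_add_order_sum [Semiring R] {ι : Type*} (s : Finset ι) (φ : ι → R⟦X⟧) {n c : ℕ∞}
    (h : ∀ i ∈ s, n ≤ c + (φ i).order) : n ≤ c + (∑ i ∈ s, φ i).order :=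
  tsub_le_iff_left.mp <| le_order_sum s φ fun i hi => tsub_le_iff_left.mpr (h i hi)

theorem lt_add_order_sum [Semiring R] {ι : Type*} (s : Finset ι) (φ : ι → R⟦X⟧) {n c : ℕ∞}
    (hn : n ≠ ⊤) (h : ∀ i ∈ s, n < c + (φ i).order) : n < c + (∑ i ∈ s, φ i).order :=
  (ENat.add_one_le_iff hn).mp <|
    le_add_order_sum s φ fun i hi => (ENat.add_one_le_iff hn).mpr (h i hi)

theorem min_order_le_order_sub [Ring R] (φ ψ : R⟦X⟧) :
    min φ.order ψ.order ≤ (φ - ψ).order := by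
  simpa only [sub_eq_add_neg, order_neg] using min_order_le_order_add φ (-ψ)

theorem lt_order_sub_of_coeff_eq [Ring R] {φ ψ : R⟦X⟧} {r : ℕ}
    (h : ∀ k ≤ r, coeff k φ = coeff k ψ) : (r : ℕ∞) < (φ - ψ).order :=
  (ENat.add_one_le_iff (ENat.natCast_ne_top r)).mp <| by
    exact_mod_cast nat_le_order _ (r + 1) fun k hk => by
      rw [map_sub, h k (Nat.lt_succ_iff.mp hk), sub_self]

theorem eq_iff_lt_order_sub [Ring R] {γ γ' x : R⟦X⟧} {r : ℕ}
    (hγ' : (r : ℕ∞) < (γ - γ').order) (hx : x ≠ γ → (γ - x).order ≤ r) :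
    x = γ ↔ (r : ℕ∞) < (x - γ').order := by
  refine ⟨fun h => h ▸ hγ', fun h => by_contra fun hne => (hx hne).not_gt ?_⟩
  calc (r : ℕ∞) < min (γ - γ').order (x - γ').order := lt_min hγ' h
    _ ≤ ((γ - γ') - (x - γ')).order := min_order_le_order_sub _ _
    _ = (γ - x).order := by rw [sub_sub_sub_cancel_right]

end PowerSeries

namespace Polynomial

section

variable {R : Type*} [Semiring R] (r : ℕ)

noncomputable def coeffWeight (P : R⟦X⟧[X]) (i : ℕ) : ℕ∞ :=
  ((i * r : ℕ) : ℕ∞) + (P.coeff i).order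

/-- The `X`-adic order of the initial form of `P` for the monomial valuation giving `t` weight `1`
and `X` weight `r`. -/
structure IsInitialIndex (P : R⟦X⟧[X]) (n : ℕ) : Prop where
  weight_ne_top : coeffWeight r P n ≠ ⊤
  weight_le (i : ℕ) : coeffWeight r P n ≤ coeffWeight r P i
  weight_lt (i : ℕ) : i < n → coeffWeight r P n < coeffWeight r P i

variable {r}

theorem IsInitialIndex.coeffWeight_eq_inf_range {P : R⟦X⟧[X]} {n : ℕ}
    (h : IsInitialIndex r P n) {D : ℕ} (hn : n ≤ D) :
    coeffWeight r P n = (range (D + 1)).inf (coeffWeight r P) :=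
  le_antisymm (Finset.le_inf fun i _ => h.weight_le i)
    (inf_le (mem_range.2 (Nat.lt_succ_of_le hn)))

theorem coeffWeight_mul (P Q : R⟦X⟧[X]) (k : ℕ) :
    coeffWeight r (P * Q) k =
      ((k * r : ℕ) : ℕ∞) + (∑ x ∈ antidiagonal k, P.coeff x.1 * Q.coeff x.2).order := by
  rw [coeffWeight, coeff_mul]

theorem IsInitialIndex.add_lt_add_coeffWeight {P Q : R⟦X⟧[X]} {a b : ℕ}
    (hP : IsInitialIndex r P a) (hQ : IsInitialIndex r Q b) {i j : ℕ} (h : i < a ∨ j < b) :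
    coeffWeight r P a + coeffWeight r Q b < coeffWeight r P i + coeffWeight r Q j := by
  rcases h with h | h
  · exact ENat.add_lt_add_of_lt_of_le hQ.weight_ne_top (hP.weight_lt i h) (hQ.weight_le j)
  · rw [add_comm, add_comm (coeffWeight r P i)]
    exact ENat.add_lt_add_of_lt_of_le hP.weight_ne_top (hQ.weight_lt j h) (hP.weight_le i)

theorem isInitialIndex_C {u : R⟦X⟧} (hu : u ≠ 0) : IsInitialIndex r (C u) 0 where
  weight_ne_top := by simpa [coeffWeight, order_eq_top] using hu
  weight_le
    | 0 => le_rfl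
    | i + 1 => by simp [coeffWeight]
  weight_lt _ h := absurd h (Nat.not_lt_zero _)

end

section NoZeroDivisors

variable {R : Type*} [Semiring R] [NoZeroDivisors R] {r : ℕ} {P Q : R⟦X⟧[X]} {a b : ℕ}

theorem add_order_coeff_mul_coeff {k : ℕ} {x : ℕ × ℕ}
    (hx : x ∈ antidiagonal k) :
    ((k * r : ℕ) : ℕ∞) + (P.coeff x.1 * Q.coeff x.2).order =
      coeffWeight r P x.1 + coeffWeight r Q x.2 := by
  rw [HasAntidiagonal.mem_antidiagonal] at hx
  rw [order_mul, coeffWeight, coeffWeight, ← hx]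
  push_cast
  ring

theorem IsInitialIndex.add_le_coeffWeight_mul (hP : IsInitialIndex r P a)
    (hQ : IsInitialIndex r Q b) (k : ℕ) :
    coeffWeight r P a + coeffWeight r Q b ≤ coeffWeight r (P * Q) k := by
  rw [coeffWeight_mul P Q]
  refine le_add_order_sum _ _ fun x hx => ?_
  rw [add_order_coeff_mul_coeff hx]
  exact add_le_add (hP.weight_le _) (hQ.weight_le _)

theorem IsInitialIndex.add_lt_coeffWeight_mul (hP : IsInitialIndex r P a)
    (hQ : IsInitialIndex r Q b) {k : ℕ} (hk : k < a + b) :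
    coeffWeight r P a + coeffWeight r Q b < coeffWeight r (P * Q) k := by
  rw [coeffWeight_mul P Q]
  refine lt_add_order_sum _ _ (WithTop.add_ne_top.2 ⟨hP.weight_ne_top, hQ.weight_ne_top⟩)
    fun x hx => ?_
  rw [add_order_coeff_mul_coeff hx]
  rw [HasAntidiagonal.mem_antidiagonal] at hx
  exact hP.add_lt_add_coeffWeight hQ (by omega)

theorem IsInitialIndex.coeffWeight_mul_add (hP : IsInitialIndex r P a)
    (hQ : IsInitialIndex r Q b) :
    coeffWeight r (P * Q) (a + b) = coeffWeight r P a + coeffWeight r Q b := by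
  have hab : (a, b) ∈ antidiagonal (a + b) := HasAntidiagonal.mem_antidiagonal.2 rfl
  set c : ℕ∞ := (((a + b) * r : ℕ) : ℕ∞)
  set rest := ∑ x ∈ (antidiagonal (a + b)).erase (a, b), P.coeff x.1 * Q.coeff x.2
  have hlead : c + (P.coeff a * Q.coeff b).order = coeffWeight r P a + coeffWeight r Q b :=
    add_order_coeff_mul_coeff hab
  have hrest : coeffWeight r P a + coeffWeight r Q b < c + rest.order := by
    refine lt_add_order_sum _ _ (WithTop.add_ne_top.2 ⟨hP.weight_ne_top, hQ.weight_ne_top⟩)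
      fun x hx => ?_
    obtain ⟨hne, hx⟩ := mem_erase.1 hx
    rw [add_order_coeff_mul_coeff hx]
    rw [HasAntidiagonal.mem_antidiagonal] at hx
    exact hP.add_lt_add_coeffWeight hQ (by grind)
  have hlt : (P.coeff a * Q.coeff b).order < rest.order :=
    (WithTop.add_lt_add_iff_left (ENat.natCast_ne_top _)).1 (hlead ▸ hrest)
  rw [coeffWeight_mul P Q, ← add_sum_erase _ _ hab, order_add_of_order_ne _ _ hlt.ne,
    min_eq_left hlt.le, hlead]

theorem IsInitialIndex.mul (hP : IsInitialIndex r P a) (hQ : IsInitialIndex r Q b) :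
    IsInitialIndex r (P * Q) (a + b) where
  weight_ne_top := by
    rw [hP.coeffWeight_mul_add hQ]
    exact WithTop.add_ne_top.2 ⟨hP.weight_ne_top, hQ.weight_ne_top⟩
  weight_le k := hP.coeffWeight_mul_add hQ ▸ hP.add_le_coeffWeight_mul hQ k
  weight_lt _ hk := hP.coeffWeight_mul_add hQ ▸ hP.add_lt_coeffWeight_mul hQ hk

end NoZeroDivisors

theorem IsInitialIndex.prod {R : Type*} [CommSemiring R] [NoZeroDivisors R] [Nontrivial R]
    {r : ℕ} {ι : Type*} {s : Finset ι} {P : ι → R⟦X⟧[X]} {n : ι → ℕ}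
    (h : ∀ j ∈ s, IsInitialIndex r (P j) (n j)) :
    IsInitialIndex r (∏ j ∈ s, P j) (∑ j ∈ s, n j) := by
  classical
  induction s using Finset.induction_on with
  | empty => simpa using isInitialIndex_C (r := r) (one_ne_zero : (1 : R⟦X⟧) ≠ 0)
  | insert j s hj ih =>
    rw [prod_insert hj, sum_insert hj]
    exact (h j (mem_insert_self j s)).mul (ih fun i hi => h i (mem_insert_of_mem hi))

theorem isInitialIndex_X_sub_C {R : Type*} [Ring R] [Nontrivial R] (r : ℕ) (δ : R⟦X⟧) :
    IsInitialIndex r (X - C δ) (if (r : ℕ∞) < δ.order then 1 else 0) := by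
  have h0 : coeffWeight r (X - C δ) 0 = δ.order := by simp [coeffWeight]
  have h1 : coeffWeight r (X - C δ) 1 = r := by simp [coeffWeight]
  have h2 : ∀ i, coeffWeight r (X - C δ) (i + 2) = ⊤ := by simp [coeffWeight, coeff_X]
  split_ifs with hδ
  · refine ⟨by simp [h1], fun i => ?_, fun i hi => ?_⟩
    · match i with
      | 0 => exact h1 ▸ h0 ▸ hδ.le
      | 1 => exact le_rfl
      | i + 2 => simp [h2]
    · obtain rfl : i = 0 := by omega
      rwa [h0, h1]
  · rw [not_lt] at hδ
    refine ⟨h0 ▸ ne_top_of_le_ne_top (ENat.natCast_ne_top r) hδ, fun i => ?_,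
      fun i hi => absurd hi (Nat.not_lt_zero i)⟩
    match i with
    | 0 => exact le_rfl
    | 1 => rwa [h0, h1]
    | i + 2 => simp [h2]

theorem rootMultiplicity_C_mul_prod_X_sub_C {R ι : Type*} [CommRing R] [IsDomain R]
    [DecidableEq R] (s : Finset ι) (g : ι → R) {u : R} (hu : u ≠ 0) (a : R) :
    rootMultiplicity a (C u * ∏ j ∈ s, (X - C (g j))) = #{j ∈ s | g j = a} := by
  have hprod : ∏ j ∈ s, (X - C (g j)) = ((s.val.map g).map fun a => X - C a).prod := by
    rw [prod_eq_multiset_prod, Multiset.map_map]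
    rfl
  rw [← count_roots, roots_C_mul _ hu, hprod, roots_multiset_prod_X_sub_C, Multiset.count_map]
  simp_rw [eq_comm (a := a)]
  rfl

theorem C_mul_prod_X_sub_C_comp_X_add_C {R ι : Type*} [CommRing R] (s : Finset ι) (g : ι → R)
    (u t : R) :
    (C u * ∏ j ∈ s, (X - C (g j))).comp (X + C t) = C u * ∏ j ∈ s, (X - C (g j - t)) := by
  simp only [mul_comp, C_comp, prod_comp, sub_comp, X_comp, map_sub]
  congr 1
  exact prod_congr rfl fun _ _ => by ring

end Polynomial

theorem multiplicity_eq_least_index_newton_polygon_general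
    (F : Polynomial (PowerSeries ℂ))
    (D : ℕ)
    (hsplit : ∃ u : PowerSeries ℂ, u ≠ 0 ∧ ∃ γs : Fin D → PowerSeries ℂ,
      F = Polynomial.C u * ∏ j, (Polynomial.X - Polynomial.C (γs j)))
    (γ : PowerSeries ℂ)
    (m : ℕ) (hm : m = Polynomial.rootMultiplicity γ F)
    (r : ℕ)
    (hrmax : (∃ γ' : PowerSeries ℂ, Polynomial.eval γ' F = 0 ∧ γ' ≠ γ ∧
        (γ - γ').order = (r : ℕ∞)) ∧
      ∀ γ' : PowerSeries ℂ, Polynomial.eval γ' F = 0 → γ' ≠ γ → (γ - γ').order ≤ (r : ℕ∞))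
    (γt : PowerSeries ℂ)
    (hγt : ∀ k : ℕ, PowerSeries.coeff k γt =
      if k ≤ r then PowerSeries.coeff k γ else 0)
    (c : ℕ → PowerSeries ℂ)
    (hc : ∀ i, c i = (F.comp (Polynomial.X + Polynomial.C γt)).coeff i)
    (b : ℕ → ℕ∞) (hb : ∀ i, b i = (c i).order) :
    ((m * r : ℕ) : ℕ∞) + b m =
        (Finset.range (D + 1)).inf (fun j => ((j * r : ℕ) : ℕ∞) + b j) ∧
      ∀ i < m, ((i * r : ℕ) : ℕ∞) + b i ≠
        (Finset.range (D + 1)).inf (fun j => ((j * r : ℕ) : ℕ∞) + b j) := by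
  classical
  obtain ⟨u, hu, γs, hF⟩ := hsplit
  have htrunc : (r : ℕ∞) < (γ - γt).order :=
    lt_order_sub_of_coeff_eq fun k hk => by rw [hγt, if_pos hk]
  have hroot (j : Fin D) : eval (γs j) F = 0 := by
    rw [hF, eval_mul, eval_prod, prod_eq_zero (mem_univ j) (by simp), mul_zero]
  have hm_card : m = #{j | (r : ℕ∞) < (γs j - γt).order} := by
    simp_rw [hm, hF, rootMultiplicity_C_mul_prod_X_sub_C _ _ hu,
      eq_iff_lt_order_sub htrunc (hrmax.2 _ (hroot _))]
  have hG : IsInitialIndex r (F.comp (Polynomial.X + Polynomial.C γt)) m := by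
    rw [hF, C_mul_prod_X_sub_C_comp_X_add_C, hm_card, card_filter, ← zero_add (∑ j, _)]
    exact (isInitialIndex_C hu).mul (IsInitialIndex.prod fun j _ => isInitialIndex_X_sub_C r _)
  have hmD : m ≤ D := hm_card ▸ (card_le_univ _).trans_eq (Fintype.card_fin D)
  have hweight (i : ℕ) : ((i * r : ℕ) : ℕ∞) + b i =
      coeffWeight r (F.comp (Polynomial.X + Polynomial.C γt)) i := by
    rw [hb, hc, coeffWeight]
  simp only [hweight, ← hG.coeffWeight_eq_inf_range hmD, true_and]
  exact fun i hi => (hG.weight_lt i hi).ne'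

/-- Theorem 4(ii): the multiplicity `m` of a Newton–Puiseux root `γ` of `f` equals the
least index `i` for which `i·r + bᵢ` achieves `min_j (j·r + b_j)`, where `r` is the
contact order of `γ`, `γ̃` its truncation in degrees `≤ r`, and `bᵢ` the order of the
coefficient of `Xⁱ` in `F(X + γ̃)`. -/
theorem multiplicity_eq_least_index_newton_polygon
    (f : MvPolynomial (Fin 2) ℝ) (hf : f ≠ 0)
    (m₀ : ℕ) (hm₀ : ∀ j < m₀, MvPolynomial.homogeneousComponent j f = 0)
    (hm₀' : MvPolynomial.homogeneousComponent m₀ f ≠ 0)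
    (hreg : MvPolynomial.eval ![1, 0] (MvPolynomial.homogeneousComponent m₀ f) ≠ 0)
    (N : ℕ) (hN : 0 < N)
    (F : Polynomial (PowerSeries ℂ))
    (hF : F = MvPolynomial.aeval
      ![Polynomial.X, Polynomial.C ((PowerSeries.X : PowerSeries ℂ) ^ N)] f)
    (D : ℕ) (hD : D = F.natDegree)
    (hsplit : ∃ u : PowerSeries ℂ, u ≠ 0 ∧ ∃ γs : Fin D → PowerSeries ℂ,
      F = Polynomial.C u * ∏ j, (Polynomial.X - Polynomial.C (γs j)))
    (γ : PowerSeries ℂ) (hγ : Polynomial.eval γ F = 0)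
    (m : ℕ) (hm : m = Polynomial.rootMultiplicity γ F)
    (r : ℕ)
    (hrmax : (∃ γ' : PowerSeries ℂ, Polynomial.eval γ' F = 0 ∧ γ' ≠ γ ∧
        (γ - γ').order = (r : ℕ∞)) ∧
      ∀ γ' : PowerSeries ℂ, Polynomial.eval γ' F = 0 → γ' ≠ γ → (γ - γ').order ≤ (r : ℕ∞))
    (γt : PowerSeries ℂ)
    (hγt : ∀ k : ℕ, PowerSeries.coeff k γt =
      if k ≤ r then PowerSeries.coeff k γ else 0)
    (c : ℕ → PowerSeries ℂ)
    (hc : ∀ i, c i = (F.comp (Polynomial.X + Polynomial.C γt)).coeff i)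
    (b : ℕ → ℕ∞) (hb : ∀ i, b i = (c i).order) :
    ((m * r : ℕ) : ℕ∞) + b m =
        (Finset.range (D + 1)).inf (fun j => ((j * r : ℕ) : ℕ∞) + b j) ∧
      ∀ i < m, ((i * r : ℕ) : ℕ∞) + b i ≠
        (Finset.range (D + 1)).inf (fun j => ((j * r : ℕ) : ℕ∞) + b j) :=
  multiplicity_eq_least_index_newton_polygon_general F D hsplit γ m hm r hrmax γt hγt c hc b hb
end
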